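/- arXiv:2209.11714 — 2 statements merged into one kernel-verified Lean document; each statement's English description precedes it below -/
import Mathlib

section
/- The Lee–Huang–Yang integral: ∫_0^∞ t²·( √(t⁴+2t²) − t² − 1 + 1/(2t²) ) dt = 8√2/15, where the integrand extends continuously to t=0 with value 1/2 after multiplication by t² (i.e., the improper Riemann integral converges and has this value). -/
/-!
Put `d = √(t² + 2) - t`. Then `t = 1/d - d/2` and `√(t² + 2) = 1/d + d/2`, and the integrand
`t³√(t² + 2) - t⁴ - t² + 1/2` has the primitive `P(d) = d⁵/80 - d³/24 - d/2`, a polynomial in `d`.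
As `t` runs over `(0, ∞)`, `d` decreases from `√2` to `0`, so the integral is
`P(0) - P(√2) = 8√2/15`. The integrand is nonnegative, which makes the improper integral converge.
-/

open MeasureTheory Real Filter Topology

lemma sqrt_sq_add_sub_eq_div {c t : ℝ} (hc : 0 ≤ t ^ 2 + c) (ht : 0 < t) :
    √(t ^ 2 + c) - t = c / (√(t ^ 2 + c) + t) := by
  have hs : √(t ^ 2 + c) ^ 2 = t ^ 2 + c := sq_sqrt hc
  rw [eq_div_iff (by positivity)]
  linear_combination hs

lemma tendsto_sqrt_sq_add_sub_atTop (c : ℝ) :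
    Tendsto (fun t => √(t ^ 2 + c) - t) atTop (𝓝 0) := by
  have hden : Tendsto (fun t => √(t ^ 2 + c) + t) atTop atTop :=
    tendsto_atTop_mono (fun _ => le_add_of_nonneg_left (sqrt_nonneg _)) tendsto_id
  refine (hden.const_div_atTop c).congr' ?_
  filter_upwards [eventually_ge_atTop (|c| + 1)] with t ht
  have hc : 0 ≤ t ^ 2 + c := by nlinarith [neg_abs_le c, abs_nonneg c]
  exact (sqrt_sq_add_sub_eq_div hc (by linarith [abs_nonneg c])).symm

lemma hasDerivAt_sqrt_sq_add_sub {c : ℝ} (hc : 0 < c) (t : ℝ) :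
    HasDerivAt (fun t => √(t ^ 2 + c) - t) (-(√(t ^ 2 + c) - t) / √(t ^ 2 + c)) t := by
  have hs : √(t ^ 2 + c) ≠ 0 := (sqrt_pos.2 (by positivity)).ne'
  have h : HasDerivAt (fun t => √(t ^ 2 + c) - t) _ t :=
    (((hasDerivAt_pow 2 t).add_const c).sqrt (by positivity)).sub (hasDerivAt_id t)
  refine h.congr_deriv ?_
  field_simp
  ring

lemma sqrt_pow_four_add_mul_sq (c : ℝ) {t : ℝ} (ht : 0 ≤ t) :
    √(t ^ 4 + c * t ^ 2) = t * √(t ^ 2 + c) := by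
  rw [show t ^ 4 + c * t ^ 2 = t ^ 2 * (t ^ 2 + c) by ring, sqrt_mul (sq_nonneg t), sqrt_sq ht]

noncomputable def lhyPoly (d : ℝ) : ℝ := d ^ 5 / 80 - d ^ 3 / 24 - d / 2

noncomputable def lhyAntideriv (t : ℝ) : ℝ := lhyPoly (√(t ^ 2 + 2) - t)

noncomputable def lhyDeriv (t : ℝ) : ℝ :=
  (1 / 2 + (√(t ^ 2 + 2) - t) ^ 2 / 8 - (√(t ^ 2 + 2) - t) ^ 4 / 16) *
    (√(t ^ 2 + 2) - t) / √(t ^ 2 + 2)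

lemma hasDerivAt_lhyPoly (d : ℝ) : HasDerivAt lhyPoly (d ^ 4 / 16 - d ^ 2 / 8 - 1 / 2) d := by
  have h : HasDerivAt lhyPoly _ d :=
    (((hasDerivAt_pow 5 d).div_const 80).sub ((hasDerivAt_pow 3 d).div_const 24)).sub
      ((hasDerivAt_id d).div_const 2)
  refine h.congr_deriv ?_
  norm_num
  ring

lemma hasDerivAt_lhyAntideriv (t : ℝ) : HasDerivAt lhyAntideriv (lhyDeriv t) t := by
  refine ((hasDerivAt_lhyPoly _).comp t (hasDerivAt_sqrt_sq_add_sub two_pos t)).congr_deriv ?_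
  rw [lhyDeriv]
  ring

lemma lhyDeriv_nonneg {t : ℝ} (ht : 0 ≤ t) : 0 ≤ lhyDeriv t := by
  rw [lhyDeriv]
  set s := √(t ^ 2 + 2)
  have hs : s ^ 2 = t ^ 2 + 2 := sq_sqrt (by positivity)
  have hs0 : 0 ≤ s := sqrt_nonneg _
  have hts : t ≤ s := by nlinarith
  have hd2 : (s - t) ^ 2 ≤ 2 := by nlinarith
  have hcoef : 0 ≤ 1 / 2 + (s - t) ^ 2 / 8 - (s - t) ^ 4 / 16 := by nlinarith [sq_nonneg (s - t)]
  exact div_nonneg (mul_nonneg hcoef (sub_nonneg.2 hts)) hs0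

lemma tendsto_lhyAntideriv_atTop : Tendsto lhyAntideriv atTop (𝓝 0) := by
  have hP : Continuous lhyPoly := by unfold lhyPoly; fun_prop
  have h := (hP.tendsto 0).comp (tendsto_sqrt_sq_add_sub_atTop 2)
  rwa [show lhyPoly 0 = 0 by norm_num [lhyPoly]] at h

lemma lhyAntideriv_zero : lhyAntideriv 0 = -(8 * √2 / 15) := by
  have h : √2 ^ 2 = 2 := sq_sqrt zero_le_two
  rw [lhyAntideriv, show √((0 : ℝ) ^ 2 + 2) - 0 = √2 by norm_num, lhyPoly]
  linear_combination (√2 ^ 3 / 80 - √2 / 60) * h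

lemma lhy_integrand_eq_lhyDeriv {t : ℝ} (ht : 0 < t) :
    t ^ 2 * (√(t ^ 4 + 2 * t ^ 2) - t ^ 2 - 1 + 1 / (2 * t ^ 2)) = lhyDeriv t := by
  rw [sqrt_pow_four_add_mul_sq 2 ht.le, lhyDeriv]
  set s := √(t ^ 2 + 2)
  have hs : s ^ 2 = t ^ 2 + 2 := sq_sqrt (by positivity)
  have hs0 : 0 < s := sqrt_pos.2 (by positivity)
  have hlhs : t ^ 2 * (t * s - t ^ 2 - 1 + 1 / (2 * t ^ 2)) = t ^ 3 * s - t ^ 4 - t ^ 2 + 1 / 2 := by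
    field_simp
  rw [hlhs, eq_div_iff hs0.ne']
  linear_combination (s ^ 3 - 5 * s ^ 2 * t + 11 * s * t ^ 2 + t ^ 3 - 4 * t) / 16 * hs

/-- **The Lee–Huang–Yang integral.** The dimensionless integral arising from
Bogoliubov's formula after the substitution `p = √c · t`:
`∫₀^∞ t²(√(t⁴+2t²) − t² − 1 + 1/(2t²)) dt = 8√2/15`. -/
theorem lhy_integral :
    ∫ t in Set.Ioi (0 : ℝ),
        t ^ 2 * (Real.sqrt (t ^ 4 + 2 * t ^ 2) - t ^ 2 - 1 + 1 / (2 * t ^ 2))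
      = 8 * Real.sqrt 2 / 15 := by
  rw [setIntegral_congr_fun measurableSet_Ioi fun t ht => lhy_integrand_eq_lhyDeriv ht,
    integral_Ioi_of_hasDerivAt_of_nonneg' (fun t _ => hasDerivAt_lhyAntideriv t)
      (fun t ht => lhyDeriv_nonneg (le_of_lt ht)) tendsto_lhyAntideriv_atTop,
    lhyAntideriv_zero]
  ring
end

section
/- Integral identity for the zero-energy scattering solution in 3d: Let R>0, let V:ℝ³→[0,∞) be continuous with supp V ⊂ {x : |x|≤R}, let a∈ℝ, and let f∈C²(ℝ³) satisfy Δf(x) = ½V(x)f(x) for all x∈ℝ³ and f(x) = 1 − a/|x| for all |x|≥R. Then ∫_{ℝ³} V(x)f(x) dx = 8πa. -/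
/-!
Integrate `Δf = ½ V f` over a cube `[-L, L]³` with `L > R`, which contains the support of `V`.
By the divergence theorem `∫ Δf` is the flux of `∇f` through the boundary of the cube, and
outside the ball of radius `R` the field `∇f(x) = a x / |x|³` is `a` times the Coulomb field.
Its flux through a face is `a` times the solid angle `4π/6` that the face subtends at the
centre, which Fubini and two explicit antiderivatives confirm. The six faces contribute `4πa`,
so `∫ V f = 2 ∫ Δf = 8πa`.
-/

open MeasureTheory Filter Real

noncomputable section

abbrev Vec3 := Fin 3 → ℝ

/-- The Euclidean norm of a point of `ℝ³`. -/
def enorm3 (x : Vec3) : ℝ := Real.sqrt (∑ k, (x k) ^ 2)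

/-- The Laplacian `Δg(x) = ∑ₖ ∂ₖ∂ₖ g(x)`. -/
def laplacian3 (g : Vec3 → ℝ) (x : Vec3) : ℝ :=
  ∑ k : Fin 3, fderiv ℝ (fun y => fderiv ℝ g y (Pi.single k 1)) x (Pi.single k 1)

theorem hasDerivAt_sqrt_const_add_sq {c : ℝ} (hc : 0 < c) (u : ℝ) :
    HasDerivAt (fun u : ℝ => √(c + u ^ 2)) (u / √(c + u ^ 2)) u := by
  have hq : 0 < c + u ^ 2 := by positivity
  convert ((hasDerivAt_pow 2 u).const_add c).sqrt hq.ne' using 1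
  field_simp
  ring

theorem integral_inv_sqrt_const_add_sq_pow_three {c : ℝ} (hc : 0 < c) (a b : ℝ) :
    ∫ u in a..b, (√(c + u ^ 2) ^ 3)⁻¹ = b / (c * √(c + b ^ 2)) - a / (c * √(c + a ^ 2)) := by
  refine intervalIntegral.integral_eq_sub_of_hasDerivAt
    (f := fun u => u / (c * √(c + u ^ 2))) (fun u _ => ?_) ?_
  · have hq : 0 < c + u ^ 2 := by positivity
    have hs : 0 < √(c + u ^ 2) := Real.sqrt_pos.2 hq
    refine ((hasDerivAt_id' u).div ((hasDerivAt_sqrt_const_add_sq hc u).const_mul c)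
      (by positivity)).congr_deriv ?_
    field_simp
    rw [Real.sq_sqrt hq.le]
    ring
  · refine Continuous.intervalIntegrable (Continuous.inv₀ (by fun_prop) fun u => ?_) _ _
    have hq : 0 < c + u ^ 2 := by positivity
    positivity

theorem integral_cube_face_marginal {L : ℝ} (hL : 0 < L) :
    ∫ v in (-L)..L, L ^ 2 / ((L ^ 2 + v ^ 2) * √(L ^ 2 + v ^ 2 + L ^ 2)) = π / 3 := by
  have hsqrt : ∀ v : ℝ, 0 < √(L ^ 2 + v ^ 2 + L ^ 2) := fun v => Real.sqrt_pos.2 (by positivity)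
  have hderiv : ∀ v : ℝ, HasDerivAt (fun v => arctan (v / √(L ^ 2 + v ^ 2 + L ^ 2)))
      (L ^ 2 / ((L ^ 2 + v ^ 2) * √(L ^ 2 + v ^ 2 + L ^ 2))) v := by
    intro v
    have hroot : HasDerivAt (fun v : ℝ => √(L ^ 2 + v ^ 2 + L ^ 2))
        (v / √(L ^ 2 + v ^ 2 + L ^ 2)) v := by
      simpa only [add_right_comm _ _ (L ^ 2)] using
        hasDerivAt_sqrt_const_add_sq (by positivity : 0 < L ^ 2 + L ^ 2) v
    refine (((hasDerivAt_id' v).fun_div hroot (hsqrt v).ne').arctan).congr_deriv ?_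
    have := hsqrt v
    field_simp
    rw [Real.sq_sqrt (by positivity)]
    ring
  have hcont : Continuous fun v : ℝ => L ^ 2 / ((L ^ 2 + v ^ 2) * √(L ^ 2 + v ^ 2 + L ^ 2)) :=
    continuous_const.div (by fun_prop) fun v => (mul_pos (by positivity) (hsqrt v)).ne'
  rw [intervalIntegral.integral_eq_sub_of_hasDerivAt (fun v _ => hderiv v)
    (hcont.intervalIntegrable _ _)]
  have hcorner : ∀ v : ℝ, v ^ 2 = L ^ 2 → √(L ^ 2 + v ^ 2 + L ^ 2) = √3 * L := fun v hv => by
    rw [hv, show L ^ 2 + L ^ 2 + L ^ 2 = 3 * L ^ 2 by ring, Real.sqrt_mul (by norm_num),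
      Real.sqrt_sq hL.le]
  rw [hcorner L rfl, hcorner (-L) (neg_sq L), neg_div, arctan_neg,
    div_mul_cancel_right₀ hL.ne', arctan_inv_sqrt_three]
  ring

theorem setIntegral_Icc_fin_two {G : ℝ → ℝ → ℝ} (hG : Continuous (Function.uncurry G))
    {a b : Fin 2 → ℝ} (hab : a ≤ b) :
    ∫ x in Set.Icc a b, G (x 0) (x 1) = ∫ v in a 0..b 0, ∫ u in a 1..b 1, G v u := by
  have hbox : Set.Icc a b =
      MeasurableEquiv.finTwoArrow ⁻¹' (Set.Icc (a 0) (b 0) ×ˢ Set.Icc (a 1) (b 1)) := by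
    ext x
    simp [Pi.le_def, Fin.forall_fin_two, MeasurableEquiv.finTwoArrow, and_and_and_comm]
  have hint : IntegrableOn (Function.uncurry G) (Set.Icc (a 0) (b 0) ×ˢ Set.Icc (a 1) (b 1)) :=
    hG.continuousOn.integrableOn_compact (isCompact_Icc.prod isCompact_Icc)
  rw [hbox]
  refine ((volume_preserving_finTwoArrow ℝ).setIntegral_preimage_emb
    (MeasurableEquiv.measurableEmbedding _) (Function.uncurry G) _).trans ?_
  rw [Measure.volume_eq_prod, setIntegral_prod _ hint,
    intervalIntegral.integral_of_le (hab 0), ← integral_Icc_eq_integral_Ioc]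
  refine setIntegral_congr_fun measurableSet_Icc fun v _ => ?_
  rw [intervalIntegral.integral_of_le (hab 1), ← integral_Icc_eq_integral_Ioc]
  rfl

theorem integral_cube_face_solid_angle {L : ℝ} (hL : 0 < L) :
    ∫ x in Set.Icc (fun _ : Fin 2 => -L) (fun _ => L), L / √(L ^ 2 + x 0 ^ 2 + x 1 ^ 2) ^ 3
      = 2 * π / 3 := by
  have hcont : Continuous fun p : ℝ × ℝ => L / √(L ^ 2 + p.1 ^ 2 + p.2 ^ 2) ^ 3 :=
    continuous_const.div (by fun_prop) fun p => by
      have : 0 < √(L ^ 2 + p.1 ^ 2 + p.2 ^ 2) := Real.sqrt_pos.2 (by positivity)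
      positivity
  have hinner : ∀ v : ℝ, ∫ u in (-L)..L, L / √(L ^ 2 + v ^ 2 + u ^ 2) ^ 3
      = 2 * (L ^ 2 / ((L ^ 2 + v ^ 2) * √(L ^ 2 + v ^ 2 + L ^ 2))) := fun v => by
    simp_rw [div_eq_mul_inv L]
    rw [intervalIntegral.integral_const_mul,
      integral_inv_sqrt_const_add_sq_pow_three (by positivity), neg_sq]
    ring
  rw [setIntegral_Icc_fin_two (G := fun v u => L / √(L ^ 2 + v ^ 2 + u ^ 2) ^ 3) hcont
      fun _ => by linarith]
  simp only [hinner, intervalIntegral.integral_const_mul, integral_cube_face_marginal hL]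
  ring

theorem abs_le_enorm3 (x : Vec3) (i : Fin 3) : |x i| ≤ enorm3 x := by
  rw [← Real.sqrt_sq_eq_abs]
  exact Real.sqrt_le_sqrt
    (Finset.single_le_sum (f := fun k => x k ^ 2) (fun k _ => sq_nonneg _) (Finset.mem_univ i))

theorem continuous_enorm3 : Continuous enorm3 := by
  unfold enorm3
  fun_prop

theorem enorm3_insertNth (i : Fin 3) (c : ℝ) (x : Fin 2 → ℝ) :
    enorm3 (i.insertNth c x) = √(c ^ 2 + x 0 ^ 2 + x 1 ^ 2) := by
  rw [enorm3, Fin.sum_univ_succAbove _ i, Fin.insertNth_apply_same, Fin.sum_univ_two]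
  simp only [Fin.insertNth_apply_succAbove, add_assoc]

theorem integral_eq_setIntegral_cube {g : Vec3 → ℝ} {R L : ℝ}
    (hg : ∀ x, g x ≠ 0 → enorm3 x ≤ R) (hRL : R ≤ L) :
    ∫ x, g x = ∫ x in Set.Icc (fun _ => -L) (fun _ => L), g x := by
  refine (setIntegral_eq_integral_of_forall_compl_eq_zero fun x hx => ?_).symm
  by_contra hgx
  obtain ⟨i, hi⟩ : ∃ i, L < |x i| := by
    by_contra! hall
    exact hx ⟨fun i => (abs_le.1 (hall i)).1, fun i => (abs_le.1 (hall i)).2⟩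
  linarith [abs_le_enorm3 x i, hg x hgx]

theorem hasFDerivAt_enorm3 {x : Vec3} (hx : 0 < enorm3 x) :
    HasFDerivAt enorm3
      ((enorm3 x)⁻¹ • ∑ k, x k • ContinuousLinearMap.proj (R := ℝ) (φ := fun _ : Fin 3 => ℝ) k)
      x := by
  have hsum : HasFDerivAt (fun y : Vec3 => ∑ k, y k ^ 2)
      (∑ k, (2 * x k) • ContinuousLinearMap.proj (R := ℝ) (φ := fun _ : Fin 3 => ℝ) k) x :=
    HasFDerivAt.fun_sum fun k _ => by
      simpa [Function.comp_def] using
        (hasDerivAt_pow 2 (x k)).comp_hasFDerivAt x (hasFDerivAt_apply (𝕜 := ℝ) k x)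
  refine (hsum.sqrt (Real.sqrt_pos.1 hx).ne').congr_fderiv ?_
  rw [Finset.smul_sum, Finset.smul_sum]
  refine Finset.sum_congr rfl fun k _ => ?_
  rw [smul_smul, smul_smul, ← enorm3]
  field_simp

theorem fderiv_one_sub_div_enorm3_single (a : ℝ) {x : Vec3} (hx : 0 < enorm3 x) (i : Fin 3) :
    fderiv ℝ (fun y => 1 - a / enorm3 y) x (Pi.single i 1) = a * x i / enorm3 x ^ 3 := by
  have hout : HasDerivAt (fun t : ℝ => 1 - a / t) (a / enorm3 x ^ 2) (enorm3 x) := by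
    simpa [div_eq_mul_inv] using ((hasDerivAt_inv hx.ne').const_mul a).const_sub 1
  have h : HasFDerivAt (fun y => 1 - a / enorm3 y) _ x :=
    hout.comp_hasFDerivAt x (hasFDerivAt_enorm3 hx)
  rw [h.fderiv]
  simp only [_root_.smul_apply, _root_.sum_apply,
    ContinuousLinearMap.proj_apply, Pi.single_apply, smul_eq_mul, mul_ite, mul_one, mul_zero,
    Finset.sum_ite_eq', Finset.mem_univ, if_true]
  field_simp

theorem integral_laplacian3_Icc {f : Vec3 → ℝ} (hf : ContDiff ℝ 2 f) {lo hi : Vec3}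
    (hle : lo ≤ hi) :
    ∫ x in Set.Icc lo hi, laplacian3 f x =
      ∑ i : Fin 3,
        ((∫ x in Set.Icc (lo ∘ i.succAbove) (hi ∘ i.succAbove),
            fderiv ℝ f (i.insertNth (hi i) x) (Pi.single i 1)) -
          ∫ x in Set.Icc (lo ∘ i.succAbove) (hi ∘ i.succAbove),
            fderiv ℝ f (i.insertNth (lo i) x) (Pi.single i 1)) := by
  have hpartial : ∀ i : Fin 3, ContDiff ℝ 1 fun x => fderiv ℝ f x (Pi.single i 1) := fun i =>
    (hf.fderiv_right (by norm_num)).clm_apply contDiff_const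
  have hlap : Continuous (laplacian3 f) := continuous_finsetSum _ fun i _ =>
    ((hpartial i).continuous_fderiv one_ne_zero).clm_apply continuous_const
  exact integral_divergence_of_hasFDerivAt_off_countable' lo hi hle
    (fun i x => fderiv ℝ f x (Pi.single i 1))
    (fun i x => fderiv ℝ (fun y => fderiv ℝ f y (Pi.single i 1)) x) ∅ Set.countable_empty
    (fun i => (hpartial i).continuous.continuousOn)
    (fun x _ i => ((hpartial i).differentiable one_ne_zero x).hasFDerivAt)
    (hlap.continuousOn.integrableOn_compact isCompact_Icc)

section Exterior

variable {R a : ℝ} {f : Vec3 → ℝ}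

theorem fderiv_single_of_exterior (hext : ∀ x, R ≤ enorm3 x → f x = 1 - a / enorm3 x)
    {y : Vec3} (hy : R < enorm3 y) (hy₀ : 0 < enorm3 y) (i : Fin 3) :
    fderiv ℝ f y (Pi.single i 1) = a * y i / enorm3 y ^ 3 := by
  have hev : f =ᶠ[nhds y] fun z => 1 - a / enorm3 z := by
    filter_upwards [isOpen_lt continuous_const continuous_enorm3 |>.mem_nhds hy] with z hz
    exact hext z hz.le
  rw [hev.fderiv_eq, fderiv_one_sub_div_enorm3_single a hy₀]

theorem integral_cube_face_of_exterior (hext : ∀ x, R ≤ enorm3 x → f x = 1 - a / enorm3 x)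
    {L : ℝ} (hL : 0 < L) (hRL : R < L) (i : Fin 3) {c : ℝ} (hc : |c| = L) :
    ∫ x in Set.Icc (fun _ : Fin 2 => -L) (fun _ => L), fderiv ℝ f (i.insertNth c x) (Pi.single i 1)
      = a * c / L * (2 * π / 3) := by
  rw [← integral_cube_face_solid_angle hL, ← integral_const_mul]
  refine setIntegral_congr_fun measurableSet_Icc fun x _ => ?_
  have hLy : L ≤ enorm3 (i.insertNth c x) := by
    simpa [hc] using abs_le_enorm3 (i.insertNth c x) i
  rw [fderiv_single_of_exterior hext (by linarith) (by linarith), Fin.insertNth_apply_same,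
    enorm3_insertNth, ← sq_abs c, hc]
  field_simp

theorem integral_laplacian3_cube_of_exterior (hf : ContDiff ℝ 2 f)
    (hext : ∀ x, R ≤ enorm3 x → f x = 1 - a / enorm3 x) {L : ℝ} (hL : 0 < L) (hRL : R < L) :
    ∫ x in Set.Icc (fun _ => -L) (fun _ => L), laplacian3 f x = 4 * π * a := by
  rw [integral_laplacian3_Icc hf fun _ => by linarith]
  simp only [Function.comp_def]
  rw [Finset.sum_congr rfl fun i _ => by
    rw [integral_cube_face_of_exterior hext hL hRL i (abs_of_pos hL),
      integral_cube_face_of_exterior hext hL hRL i (by rw [abs_neg, abs_of_pos hL])]]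
  simp only [Finset.sum_const, Finset.card_univ, Fintype.card_fin]
  field_simp
  ring

end Exterior

theorem scattering_integral_identity_general
    (R : ℝ) (hR : 0 < R)
    (V : Vec3 → ℝ)
    (hVsupp : ∀ x : Vec3, V x ≠ 0 → enorm3 x ≤ R)
    (a : ℝ) (f : Vec3 → ℝ) (hf : ContDiff ℝ 2 f)
    (hscatt : ∀ x : Vec3, laplacian3 f x = (1 / 2) * V x * f x)
    (hext : ∀ x : Vec3, R ≤ enorm3 x → f x = 1 - a / enorm3 x) :
    ∫ x : Vec3, V x * f x = 8 * π * a := by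
  have hRL : R < R + 1 := lt_add_one R
  calc ∫ x, V x * f x
      = ∫ x in Set.Icc (fun _ => -(R + 1)) (fun _ => R + 1), V x * f x :=
        integral_eq_setIntegral_cube (fun x h => hVsupp x (left_ne_zero_of_mul h)) hRL.le
    _ = ∫ x in Set.Icc (fun _ => -(R + 1)) (fun _ => R + 1), 2 * laplacian3 f x := by
        congr 1 with x
        rw [hscatt]
        ring
    _ = 8 * π * a := by
        rw [integral_const_mul,
          integral_laplacian3_cube_of_exterior hf hext (by linarith) hRL]
        ring

/-- **Integral identity for the zero-energy scattering solution in 3d.** If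
`f ∈ C²(ℝ³)` solves `Δf = ½Vf` with `f(x) = 1 − a/|x|` for `|x| ≥ R` and `V ≥ 0`
is continuous with support in the ball of radius `R`, then `∫ V f = 8πa`. -/
theorem scattering_integral_identity
    (R : ℝ) (hR : 0 < R)
    (V : Vec3 → ℝ) (hVcont : Continuous V) (hVpos : ∀ x, 0 ≤ V x)
    (hVsupp : ∀ x : Vec3, V x ≠ 0 → enorm3 x ≤ R)
    (a : ℝ) (f : Vec3 → ℝ) (hf : ContDiff ℝ 2 f)
    (hscatt : ∀ x : Vec3, laplacian3 f x = (1 / 2) * V x * f x)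
    (hext : ∀ x : Vec3, R ≤ enorm3 x → f x = 1 - a / enorm3 x) :
    ∫ x : Vec3, V x * f x = 8 * π * a :=
  scattering_integral_identity_general R hR V hVsupp a f hf hscatt hext
end
end
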